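/- arXiv:2201.12391 — 2 statements merged into one kernel-verified Lean document; each statement's English description precedes it below -/
import Mathlib

section
/- Let X be a real vector space, V₀ ⊆ X a linear subspace, D : X × X → ℝ a symmetric positive-semidefinite bilinear form with ‖x‖_V := √(D(x,x)), |·|₁ : X → ℝ a seminorm, ‖·‖₁ : X → ℝ a norm, D^h : X × X → ℝ a bilinear form, and G : X → ℝ a linear map. Assume: (i) there is κ > 0 with ‖v‖_V ≤ κ·|v|₁ for all v ∈ V₀; (ii) there is κ₁ > 0 with ‖x‖_V ≤ κ₁·‖x‖₁ for all x ∈ X; (iii) there is κ₂ > 0 with ‖v‖₁ ≤ κ₂·|v|₁ for all v ∈ V₀; (iv) there is c > 0 with D^h(v,v) ≥ c·|v|₁² for all v ∈ V₀; (v) u ∈ X satisfies D(u,w) = G(w) for all w ∈ V₀; (vi) u^h ∈ V₀ satisfies D^h(u^h,w) = G(w) for all w ∈ V₀. Then, with C := 1 + κ·κ₂·(κ₁ + 1)/c, for every v ∈ V₀ and every S ≥ 0 such that |D(v,w) − D^h(v,w)| ≤ S·‖w‖_V for all w ∈ V₀, one has ‖u − u^h‖₁ ≤ C·(‖u − v‖₁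 + S). -/
/-- Cauchy–Schwarz for a symmetric PSD bilinear form over ℝ. -/
lemma psd_cauchy_schwarz {X : Type*} [AddCommGroup X] [Module ℝ X]
    (D : X →ₗ[ℝ] X →ₗ[ℝ] ℝ)
    (hDsymm : ∀ x y : X, D x y = D y x)
    (hDpsd : ∀ x : X, 0 ≤ D x x) (x y : X) :
    |D x y| ≤ Real.sqrt (D x x) * Real.sqrt (D y y) := by
  have hquad : ∀ t : ℝ, 0 ≤ D y y * (t * t) + (2 * D x y) * t + D x x := by
    intro t
    have h := hDpsd (x + t • y)
    simp only [map_add, map_smul, LinearMap.add_apply, LinearMap.smul_apply,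
      smul_eq_mul] at h
    rw [← hDsymm x y] at h
    nlinarith [h]
  have hdisc := discrim_le_zero hquad
  rw [discrim] at hdisc
  have hsq : (D x y) ^ 2 ≤ D x x * D y y := by nlinarith
  calc |D x y| = Real.sqrt ((D x y) ^ 2) := (Real.sqrt_sq_eq_abs _).symm
    _ ≤ Real.sqrt (D x x * D y y) := Real.sqrt_le_sqrt hsq
    _ = Real.sqrt (D x x) * Real.sqrt (D y y) := Real.sqrt_mul (hDpsd x) _

/-- Abstract Strang-type lemma (`H¹`-norm version).  `nV x = √(D x x)` is the
nonlocal energy seminorm, `sn` plays the role of the `H¹` seminorm, `nrm` the role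
of the `H¹` norm (a seminorm which is definite), `Dh` the approximate bilinear form
and `G` a linear functional. -/
theorem strang_H1_norm
    {X : Type*} [AddCommGroup X] [Module ℝ X]
    (V₀ : Submodule ℝ X)
    (D : X →ₗ[ℝ] X →ₗ[ℝ] ℝ)
    (hDsymm : ∀ x y : X, D x y = D y x)
    (hDpsd : ∀ x : X, 0 ≤ D x x)
    (nV : X → ℝ) (hnV : ∀ x : X, nV x = Real.sqrt (D x x))
    (sn : Seminorm ℝ X)
    (nrm : Seminorm ℝ X) (hnrmDef : ∀ x : X, nrm x = 0 → x = 0)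
    (Dh : X →ₗ[ℝ] X →ₗ[ℝ] ℝ)
    (G : X →ₗ[ℝ] ℝ)
    (κ : ℝ) (hκ : 0 < κ)
    (hembed : ∀ v ∈ V₀, nV v ≤ κ * sn v)
    (κ₁ : ℝ) (hκ₁ : 0 < κ₁)
    (hembed₁ : ∀ x : X, nV x ≤ κ₁ * nrm x)
    (κ₂ : ℝ) (hκ₂ : 0 < κ₂)
    (hpoincare : ∀ v ∈ V₀, nrm v ≤ κ₂ * sn v)
    (c : ℝ) (hc : 0 < c)
    (hcoer : ∀ v ∈ V₀, c * (sn v) ^ 2 ≤ Dh v v)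
    (u : X) (hu : ∀ w ∈ V₀, D u w = G w)
    (uh : X) (huh : uh ∈ V₀) (huhEq : ∀ w ∈ V₀, Dh uh w = G w)
    (v : X) (hv : v ∈ V₀)
    (S : ℝ) (hS : 0 ≤ S)
    (hcons : ∀ w ∈ V₀, |D v w - Dh v w| ≤ S * nV w) :
    nrm (u - uh) ≤ (1 + κ * κ₂ * (κ₁ + 1) / c) * (nrm (u - v) + S) := by
  set e : X := v - uh with he_def
  have he : e ∈ V₀ := V₀.sub_mem hv huh
  set M : ℝ := nrm (u - v) with hM_def
  have hM : 0 ≤ M := apply_nonneg nrm _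
  have hsn : 0 ≤ sn e := apply_nonneg sn _
  -- key energy estimate
  have hexp : ∀ w : X, Dh e w = Dh v w - Dh uh w := by
    intro w; rw [he_def, map_sub, LinearMap.sub_apply]
  have hDhee : Dh e e = (Dh v e - D v e) + D (v - u) e := by
    have h1 : Dh uh e = G e := huhEq e he
    have h2 : D u e = G e := hu e he
    have h3 : D (v - u) e = D v e - D u e := by
      have h4 : D (v - u) = D v - D u := map_sub D v u
      rw [h4, LinearMap.sub_apply]
    rw [hexp e, h1, ← h2, h3]; ring
  have hcs : |D (v - u) e| ≤ nV (v - u) * nV e := by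
    rw [hnV, hnV]; exact psd_cauchy_schwarz D hDsymm hDpsd _ _
  have hnVe : nV e ≤ κ * sn e := hembed e he
  have hnVvu : nV (v - u) ≤ κ₁ * M := by
    have h := hembed₁ (v - u)
    have hsym : nrm (v - u) = nrm (u - v) := by
      rw [← neg_sub u v, map_neg_eq_map]
    rw [hsym] at h; exact h
  have hnVe0 : 0 ≤ nV e := by rw [hnV]; exact Real.sqrt_nonneg _
  have hkey : c * (sn e) ^ 2 ≤ (S + κ₁ * M) * (κ * sn e) := by
    have h0 := hcoer e he
    have h1 : |Dh v e - D v e| ≤ S * nV e := by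
      rw [abs_sub_comm]; exact hcons e he
    have h2 : Dh e e ≤ S * nV e + nV (v - u) * nV e := by
      rw [hDhee]
      have := (abs_le.mp h1).2
      have := (abs_le.mp hcs).2
      linarith
    have h3 : S * nV e + nV (v - u) * nV e ≤ (S + κ₁ * M) * (κ * sn e) := by
      have hb1 : S * nV e ≤ S * (κ * sn e) := mul_le_mul_of_nonneg_left hnVe hS
      have hb2 : nV (v - u) * nV e ≤ (κ₁ * M) * (κ * sn e) :=
        mul_le_mul hnVvu hnVe hnVe0 (by positivity)
      linarith
    linarith
  -- deduce a bound on sn e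
  have hsne : sn e ≤ κ * (S + κ₁ * M) / c := by
    rcases eq_or_lt_of_le hsn with h | h
    · rw [← h]; positivity
    · rw [le_div_iff₀ hc]
      have h' : (c * sn e) * sn e ≤ ((S + κ₁ * M) * κ) * sn e := by nlinarith [hkey]
      have h'' := le_of_mul_le_mul_right h' h
      nlinarith [h'']
  have hnrme : nrm e ≤ κ₂ * (κ * (S + κ₁ * M) / c) :=
    le_trans (hpoincare e he) (mul_le_mul_of_nonneg_left hsne hκ₂.le)
  have htri : nrm (u - uh) ≤ M + nrm e := by
    have h : u - uh = (u - v) + e := by rw [he_def]; abel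
    rw [h]; exact map_add_le_add nrm _ _
  have hfinal : M + κ₂ * (κ * (S + κ₁ * M) / c) ≤
      (1 + κ * κ₂ * (κ₁ + 1) / c) * (M + S) := by
    have hL : M + κ₂ * (κ * (S + κ₁ * M) / c)
        = (c * M + κ * κ₂ * (S + κ₁ * M)) / c := by
      field_simp
    have hR : (1 + κ * κ₂ * (κ₁ + 1) / c) * (M + S)
        = ((c + κ * κ₂ * (κ₁ + 1)) * (M + S)) / c := by
      field_simp
    rw [hL, hR]
    apply (div_le_div_iff_of_pos_right hc).mpr
    nlinarith [mul_nonneg hc.le hS, mul_nonneg (mul_pos hκ hκ₂).le hM,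
      mul_nonneg (mul_pos hκ hκ₂).le (mul_nonneg hκ₁.le hS),
      mul_nonneg (mul_pos hκ hκ₂).le hS]
  linarith
end

section
/- Let u : ℝ² → ℝ be twice continuously differentiable and let x ∈ ℝ². Then (8/(π·δ⁴))·∫_{{y : ‖y−x‖ ≤ δ}} (u(y) − u(x)) dy tends to Δu(x) = ∂²u/∂x₁²(x) + ∂²u/∂x₂²(x) as δ → 0⁺. Equivalently, the nonlocal Laplacian L_δ u(x) = 2·∫_{ℝ²} γ_{2,c}(x,y)·(u(y) − u(x)) dy with constant two-dimensional kernel γ_{2,c}(x,y) = 4/(π·δ⁴) for ‖y − x‖ ≤ δ and 0 otherwise converges to the local Laplacian Δu(x) in the limit of vanishing horizon. -/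
/-!
Subtract from `u` its second-order Taylor polynomial at `x`. Over the ball `B_δ` of radius `δ`
around the origin of an `n`-dimensional space, the linear term integrates to zero, and since
reflections preserve `B_δ` the second moments are isotropic:
`∫_{B_δ} ⟪a, h⟫ ⟪b, h⟫ dh = ⟪a, b⟫ / n · ∫_{B_δ} ‖h‖² dh`.
Hence the quadratic term contributes `(∫_{B_δ} ‖h‖²) / (2n) · Δu(x)`, while the Taylor
remainder is `o(‖h‖²)` and so contributes `o(∫_{B_δ} ‖h‖²)`.
In the plane `∫_{B_δ} ‖h‖² dh = π δ⁴ / 2`.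
-/

open MeasureTheory Filter Real Metric Topology Asymptotics Module InnerProductSpace Laplacian
open scoped RealInnerProductSpace

section Taylor

variable {E F : Type*} [NormedAddCommGroup E] [NormedSpace ℝ E]
  [NormedAddCommGroup F] [NormedSpace ℝ F] {u : E → F}

theorem ContDiff.hasFDerivAt_sub_taylor_two (hu : ContDiff ℝ 2 u) (x k : E) :
    HasFDerivAt (fun h => u (x + h) - u x - fderiv ℝ u x h
        - (2 : ℝ)⁻¹ • fderiv ℝ (fderiv ℝ u) x h h)
      (fderiv ℝ u (x + k) - fderiv ℝ u x - fderiv ℝ (fderiv ℝ u) x k) k := by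
  set B := fderiv ℝ (fderiv ℝ u) x
  have hshift : HasFDerivAt (fun h => u (x + h)) (fderiv ℝ u (x + k)) k :=
    (hasFDerivAt_comp_add_left x).2 ((hu.differentiable (by simp)) (x + k)).hasFDerivAt
  have hquad : HasFDerivAt (fun h => B h h) (B k + B.flip k) k := by
    simpa using B.hasFDerivAt.clm_apply (hasFDerivAt_id k)
  have hsymm : B.flip k = B k := by
    ext v; exact (hu.contDiffAt.isSymmSndFDerivAt (by simp)).eq v k
  convert ((hshift.sub_const (u x)).sub (fderiv ℝ u x).hasFDerivAt).sub
    (hquad.const_smul (2 : ℝ)⁻¹) using 1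
  · rfl
  rw [hsymm, ← two_smul ℝ (B k), smul_smul]
  norm_num

theorem ContDiff.isLittleO_sub_taylor_two (hu : ContDiff ℝ 2 u) (x : E) :
    (fun h => u (x + h) - u x - fderiv ℝ u x h
        - (2 : ℝ)⁻¹ • fderiv ℝ (fderiv ℝ u) x h h)
      =o[𝓝 0] fun h => ‖h‖ ^ 2 := by
  refine isLittleO_iff.2 fun ε hε => ?_
  have hB : HasFDerivAt (fderiv ℝ u) (fderiv ℝ (fderiv ℝ u) x) x :=
    ((hu.fderiv_right (m := 1) (by norm_num)).differentiable (by simp) x).hasFDerivAt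
  obtain ⟨r, hr, hball⟩ := Metric.eventually_nhds_iff_ball.1 <|
    isLittleO_iff.1 (hasFDerivAt_iff_isLittleO_nhds_zero.1 hB) hε
  filter_upwards [ball_mem_nhds (0 : E) hr] with h hh
  have hbound : ∀ k ∈ closedBall (0 : E) ‖h‖,
      ‖fderiv ℝ u (x + k) - fderiv ℝ u x - fderiv ℝ (fderiv ℝ u) x k‖ ≤ ε * ‖h‖ :=
    fun k hk => (hball k (closedBall_subset_ball (mem_ball_zero_iff.1 hh) hk)).trans <|
      by gcongr; simpa using hk
  have hmv := (convex_closedBall (0 : E) ‖h‖).norm_image_sub_le_of_norm_hasFDerivWithin_le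
    (fun k _ => (hu.hasFDerivAt_sub_taylor_two x k).hasFDerivWithinAt) hbound
    (mem_closedBall_self (norm_nonneg h)) (mem_closedBall_zero_iff.2 le_rfl)
  simpa [sq, mul_assoc] using hmv

end Taylor

section Ball

variable {E : Type*} [NormedAddCommGroup E] [MeasurableSpace E] [BorelSpace E] {μ : Measure E}
  {G : Type*} [NormedAddCommGroup G] [NormedSpace ℝ G]

theorem setIntegral_closedBall_eq_closedBall_zero [μ.IsAddLeftInvariant]
    (f : E → G) (x : E) (δ : ℝ) :
    ∫ y in closedBall x δ, f y ∂μ = ∫ h in closedBall 0 δ, f (x + h) ∂μ := by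
  have := (measurePreserving_add_left μ x).setIntegral_preimage_emb
    (Homeomorph.addLeft x).measurableEmbedding f (closedBall x δ)
  rw [preimage_add_closedBall, sub_self] at this
  exact this.symm

theorem integral_ite_norm_sub_le_mul (f : E → ℝ) (x : E) (δ c : ℝ) :
    ∫ y, (if ‖y - x‖ ≤ δ then c else 0) * f y ∂μ
      = c * ∫ y in closedBall x δ, f y ∂μ := by
  rw [← integral_const_mul, ← integral_indicator measurableSet_closedBall]
  congr 1 with y
  classical
  rw [Set.indicator_apply, mem_closedBall, dist_eq_norm, ite_mul, zero_mul]

theorem Asymptotics.IsLittleO.setIntegral_closedBall {R : E → G} {g : E → ℝ} {x : E}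
    (hR : R =o[𝓝 x] g) (hg_nonneg : 0 ≤ g) (hg : ∀ δ, IntegrableOn g (closedBall x δ) μ) :
    (fun δ => ∫ h in closedBall x δ, R h ∂μ)
      =o[𝓝 0] fun δ => ∫ h in closedBall x δ, g h ∂μ := by
  refine isLittleO_iff.2 fun ε hε => ?_
  obtain ⟨r, hr, hball⟩ := Metric.eventually_nhds_iff_ball.1 (isLittleO_iff.1 hR hε)
  filter_upwards [Iio_mem_nhds hr] with δ hδ
  have hle : ∀ h ∈ closedBall x δ, ‖R h‖ ≤ ε * g h := fun h hh => by
    simpa [abs_of_nonneg (hg_nonneg h)] using hball h (closedBall_subset_ball hδ hh)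
  rw [Real.norm_of_nonneg (integral_nonneg fun h => hg_nonneg h), ← integral_const_mul]
  exact norm_integral_le_of_norm_le ((hg δ).const_mul ε)
    (ae_restrict_of_forall_mem measurableSet_closedBall hle)

end Ball

section Haar

variable {E : Type*} [NormedAddCommGroup E] [NormedSpace ℝ E] [FiniteDimensional ℝ E]
  [MeasurableSpace E] [BorelSpace E] (μ : Measure E) [μ.IsAddHaarMeasure]

theorem setIntegral_closedBall_norm_sq {δ : ℝ} (hδ : 0 ≤ δ) :
    ∫ h in closedBall (0 : E) δ, ‖h‖ ^ 2 ∂μ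
      = finrank ℝ E / (finrank ℝ E + 2) * μ.real (ball 0 1) * δ ^ (finrank ℝ E + 2) := by
  obtain hE | hE := subsingleton_or_nontrivial E
  · simp [Subsingleton.elim _ (0 : E), finrank_zero_of_subsingleton]
  have hn := finrank_pos (R := ℝ) (M := E)
  have hind : (closedBall (0 : E) δ).indicator (fun h => ‖h‖ ^ 2)
      = fun h => (Set.Iic δ).indicator (fun t : ℝ => t ^ 2) ‖h‖ := by
    ext h
    by_cases hh : ‖h‖ ≤ δ <;> simp [hh, Set.indicator_of_mem, Set.indicator_of_notMem]
  rw [← integral_indicator measurableSet_closedBall, hind, integral_fun_norm_addHaar μ]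
  have hradial :
      ∫ t in Set.Ioi (0 : ℝ), t ^ (finrank ℝ E - 1) • (Set.Iic δ).indicator (· ^ 2) t
      = δ ^ (finrank ℝ E + 2) / (finrank ℝ E + 2) := by
    have (t : ℝ) : t ^ (finrank ℝ E - 1) • (Set.Iic δ).indicator (· ^ 2) t
        = (Set.Iic δ).indicator (· ^ (finrank ℝ E + 1)) t := by
      by_cases ht : t ≤ δ
      · simp [ht, ← pow_add]
        congr 1
        omega
      · simp [ht]
    simp_rw [this]
    rw [setIntegral_indicator measurableSet_Iic, Set.Ioi_inter_Iic,
      ← intervalIntegral.integral_of_le hδ, integral_pow]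
    push_cast
    ring_nf
  rw [hradial, nsmul_eq_mul, smul_eq_mul]
  ring

end Haar

section Symmetry

variable {E G : Type*} [NormedAddCommGroup E] [InnerProductSpace ℝ E] [FiniteDimensional ℝ E]
  [MeasurableSpace E] [BorelSpace E] [NormedAddCommGroup G] [NormedSpace ℝ G]

theorem setIntegral_closedBall_comp_linearIsometryEquiv (σ : E ≃ₗᵢ[ℝ] E) (f : E → G)
    (δ : ℝ) :
    ∫ h in closedBall 0 δ, f (σ h) = ∫ h in closedBall 0 δ, f h := by
  have := σ.measurePreserving.setIntegral_preimage_emb σ.toHomeomorph.measurableEmbedding f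
    (closedBall 0 δ)
  rwa [σ.preimage_closedBall, map_zero] at this

theorem setIntegral_closedBall_continuousLinearMap_eq_zero (L : E →L[ℝ] ℝ) (δ : ℝ) :
    ∫ h in closedBall 0 δ, L h = 0 := by
  have := setIntegral_closedBall_comp_linearIsometryEquiv (.neg ℝ) L δ
  simp only [LinearIsometryEquiv.coe_neg, map_neg, integral_neg] at this
  linarith

theorem setIntegral_closedBall_inner_sq_eq_of_norm_eq {a b : E} (hab : ‖a‖ = ‖b‖)
    (δ : ℝ) :
    ∫ h in closedBall 0 δ, ⟪a, h⟫ ^ 2 = ∫ h in closedBall 0 δ, ⟪b, h⟫ ^ 2 := by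
  set σ := (ℝ ∙ (a - b))ᗮ.reflection
  have hσ (h : E) : ⟪a, σ h⟫ = ⟪b, h⟫ := by
    rw [← σ.inner_map_map, Submodule.reflection_sub hab, Submodule.reflection_reflection]
  simpa only [hσ] using
    (setIntegral_closedBall_comp_linearIsometryEquiv σ (fun h => ⟪a, h⟫ ^ 2) δ).symm

theorem setIntegral_closedBall_inner_mul_inner_eq_zero {a b : E} (hab : ⟪a, b⟫ = 0)
    (δ : ℝ) : ∫ h in closedBall 0 δ, ⟪a, h⟫ * ⟪b, h⟫ = 0 := by
  set σ := (ℝ ∙ a)ᗮ.reflection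
  have hσa (h : E) : ⟪a, σ h⟫ = -⟪a, h⟫ := by
    rw [← σ.inner_map_map, Submodule.reflection_orthogonalComplement_singleton_eq_neg,
      Submodule.reflection_reflection, inner_neg_left]
  have hσb (h : E) : ⟪b, σ h⟫ = ⟪b, h⟫ := by
    rw [← σ.inner_map_map, Submodule.reflection_reflection,
      Submodule.reflection_mem_subspace_eq_self
        (Submodule.mem_orthogonal_singleton_iff_inner_right.2 hab)]
  have := setIntegral_closedBall_comp_linearIsometryEquiv σ (fun h => ⟪a, h⟫ * ⟪b, h⟫) δ
  simp only [hσa, hσb, neg_mul, integral_neg] at this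
  linarith

theorem setIntegral_closedBall_inner_sq_of_norm_eq_one {a : E} (ha : ‖a‖ = 1) (δ : ℝ) :
    ∫ h in closedBall 0 δ, ⟪a, h⟫ ^ 2
      = (∫ h in closedBall (0 : E) δ, ‖h‖ ^ 2) / finrank ℝ E := by
  set w := stdOrthonormalBasis ℝ E
  have hn : (finrank ℝ E : ℝ) ≠ 0 := by
    have : Nontrivial E := ⟨a, 0, by simp [← norm_ne_zero_iff, ha]⟩
    exact_mod_cast finrank_pos.ne'
  have hsum :
      ∫ h in closedBall (0 : E) δ, ‖h‖ ^ 2 = ∑ i, ∫ h in closedBall 0 δ, ⟪w i, h⟫ ^ 2 := by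
    simp_rw [← w.sum_sq_inner_right]
    exact integral_finsetSum _ fun i _ => ((continuous_const.inner continuous_id).pow 2)
      |>.continuousOn.integrableOn_compact (isCompact_closedBall _ _)
  have heq (i) : ∫ h in closedBall 0 δ, ⟪w i, h⟫ ^ 2 = ∫ h in closedBall 0 δ, ⟪a, h⟫ ^ 2 :=
    setIntegral_closedBall_inner_sq_eq_of_norm_eq (by rw [w.orthonormal.1 i, ha]) δ
  simp only [hsum, heq, Finset.sum_const, Finset.card_univ, Fintype.card_fin, nsmul_eq_mul]
  field_simp

theorem setIntegral_closedBall_bilinear_self {ι : Type*} [Fintype ι]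
    (v : OrthonormalBasis ι ℝ E) (B : E →L[ℝ] E →L[ℝ] ℝ) (δ : ℝ) :
    ∫ h in closedBall 0 δ, B h h
      = (∫ h in closedBall (0 : E) δ, ‖h‖ ^ 2) / finrank ℝ E * ∑ i, B (v i) (v i) := by
  classical
  have hexpand (h : E) : B h h = ∑ i, ∑ j, ⟪v i, h⟫ * ⟪v j, h⟫ * B (v i) (v j) := by
    conv_lhs => rw [← v.sum_repr' h]
    simp only [map_sum, map_smul, FunLike.coe_sum, Finset.sum_apply,
      FunLike.coe_smul, Pi.smul_apply, smul_eq_mul, Finset.mul_sum]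
    rw [Finset.sum_comm]
    exact Finset.sum_congr rfl fun i _ => Finset.sum_congr rfl fun j _ => by ring
  have hmoment (i j : ι) : ∫ h in closedBall 0 δ, ⟪v i, h⟫ * ⟪v j, h⟫ * B (v i) (v j)
      = if i = j then (∫ h in closedBall (0 : E) δ, ‖h‖ ^ 2) / finrank ℝ E * B (v i) (v i)
        else 0 := by
    rw [integral_mul_const]
    split_ifs with hij
    · subst hij
      simp_rw [← sq]
      rw [setIntegral_closedBall_inner_sq_of_norm_eq_one (v.orthonormal.1 i)]
    · rw [setIntegral_closedBall_inner_mul_inner_eq_zero (v.orthonormal.2 hij), zero_mul]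
  have hint (i j : ι) : IntegrableOn (fun h => ⟪v i, h⟫ * ⟪v j, h⟫ * B (v i) (v j))
      (closedBall 0 δ) := by
    refine Continuous.continuousOn ?_ |>.integrableOn_compact (isCompact_closedBall _ _)
    fun_prop
  rw [show (fun h => B h h) = _ from funext hexpand,
    integral_finsetSum _ fun i _ => integrable_finsetSum _ fun j _ => hint i j]
  simp_rw [integral_finsetSum _ fun j _ => hint _ j, hmoment, Finset.sum_ite_eq,
    Finset.mem_univ, if_true, Finset.mul_sum]

end Symmetry

section MeanValue

variable {E : Type*} [NormedAddCommGroup E] [InnerProductSpace ℝ E] [FiniteDimensional ℝ E]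
  [MeasurableSpace E] [BorelSpace E] {u : E → ℝ}

theorem ContDiff.isLittleO_setIntegral_closedBall_sub (hu : ContDiff ℝ 2 u) (x : E) :
    (fun δ => (∫ y in closedBall x δ, (u y - u x))
        - (∫ h in closedBall (0 : E) δ, ‖h‖ ^ 2) / (2 * finrank ℝ E) * Δ u x)
      =o[𝓝 0] fun δ => ∫ h in closedBall (0 : E) δ, ‖h‖ ^ 2 := by
  set v := stdOrthonormalBasis ℝ E
  set L := fderiv ℝ u x
  set B := fderiv ℝ (fderiv ℝ u) x
  set R := fun h => u (x + h) - u x - L h - (2 : ℝ)⁻¹ • B h h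
  have hint {f : E → ℝ} (hf : Continuous f) (δ : ℝ) : IntegrableOn f (closedBall 0 δ) :=
    hf.continuousOn.integrableOn_compact (isCompact_closedBall _ _)
  have hcu := hu.continuous
  have hR : (fun δ => ∫ h in closedBall 0 δ, R h) =o[𝓝 0]
      fun δ => ∫ h in closedBall (0 : E) δ, ‖h‖ ^ 2 :=
    (hu.isLittleO_sub_taylor_two x).setIntegral_closedBall (fun h => by positivity)
      (hint (by fun_prop))
  have hΔ : Δ u x = ∑ i, B (v i) (v i) := by
    simp [laplacian_eq_iteratedFDeriv_stdOrthonormalBasis, iteratedFDeriv_two_apply, v, B]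
  have hsplit (δ : ℝ) : ∫ y in closedBall x δ, (u y - u x)
      = (∫ h in closedBall 0 δ, L h) + (2 : ℝ)⁻¹ * (∫ h in closedBall 0 δ, B h h)
        + ∫ h in closedBall 0 δ, R h := by
    rw [setIntegral_closedBall_eq_closedBall_zero, ← integral_const_mul,
      ← integral_add (hint L.continuous δ) (hint (by fun_prop) δ),
      ← integral_add (hint (by fun_prop) δ) (hint (by fun_prop) δ)]
    congr 1 with h
    simp only [R, smul_eq_mul]
    ring
  refine hR.congr_left fun δ => ?_
  rw [hsplit, setIntegral_closedBall_continuousLinearMap_eq_zero,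
    setIntegral_closedBall_bilinear_self v, hΔ]
  ring

/-- The prefactor is `2n / ∫_{B_δ} ‖h‖²` (see `setIntegral_closedBall_norm_sq`). -/
theorem ContDiff.tendsto_setIntegral_closedBall_sub [Nontrivial E] (hu : ContDiff ℝ 2 u)
    (x : E) :
    Tendsto (fun δ => 2 * (finrank ℝ E + 2)
        / (volume.real (ball (0 : E) 1) * δ ^ (finrank ℝ E + 2))
        * ∫ y in closedBall x δ, (u y - u x)) (𝓝[>] 0) (𝓝 (Δ u x)) := by
  have hn : (0 : ℝ) < finrank ℝ E := by exact_mod_cast finrank_pos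
  have hω : 0 < volume.real (ball (0 : E) 1) :=
    ENNReal.toReal_pos (measure_ball_pos volume 0 one_pos).ne' measure_ball_lt_top.ne
  have hlim := (((hu.isLittleO_setIntegral_closedBall_sub x).tendsto_div_nhds_zero.mono_left
    (nhdsWithin_le_nhds (s := Set.Ioi 0))).const_mul (2 * (finrank ℝ E : ℝ))).add_const
    (Δ u x)
  rw [mul_zero, zero_add] at hlim
  refine hlim.congr' ?_
  filter_upwards [self_mem_nhdsWithin] with δ (hδ : 0 < δ)
  rw [setIntegral_closedBall_norm_sq volume hδ.le]
  field_simp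
  ring

end MeanValue

/-- The two-dimensional nonlocal Laplacian with constant kernel
`γ₂c(x,y) = 4/(πδ⁴)` for `‖y−x‖ ≤ δ` (and `0` otherwise) converges, as the horizon
`δ → 0⁺`, to the local Laplacian `Δu(x)` for every `C²` function `u` on `ℝ²`.
Here `Δu(x)` is expressed as the sum of the pure second directional derivatives
along the coordinate directions. -/
theorem nonlocal_laplacian_constant_kernel_2d_limit
    (u : EuclideanSpace ℝ (Fin 2) → ℝ) (hu : ContDiff ℝ 2 u)
    (x : EuclideanSpace ℝ (Fin 2)) :
    Tendsto (fun δ : ℝ =>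
        (8 / (π * δ ^ 4)) * ∫ y in Metric.closedBall x δ, (u y - u x))
      (nhdsWithin 0 (Set.Ioi 0))
      (nhds (∑ i : Fin 2, iteratedFDeriv ℝ 2 u x
        ![EuclideanSpace.single i (1 : ℝ), EuclideanSpace.single i (1 : ℝ)])) ∧
    Tendsto (fun δ : ℝ =>
        2 * ∫ y : EuclideanSpace ℝ (Fin 2),
          (if ‖y - x‖ ≤ δ then 4 / (π * δ ^ 4) else 0) * (u y - u x))
      (nhdsWithin 0 (Set.Ioi 0))
      (nhds (∑ i : Fin 2, iteratedFDeriv ℝ 2 u x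
        ![EuclideanSpace.single i (1 : ℝ), EuclideanSpace.single i (1 : ℝ)])) := by
  have hΔ : Δ u x = ∑ i : Fin 2, iteratedFDeriv ℝ 2 u x
      ![EuclideanSpace.single i (1 : ℝ), EuclideanSpace.single i (1 : ℝ)] := by
    simp [laplacian_eq_iteratedFDeriv_orthonormalBasis u (EuclideanSpace.basisFun (Fin 2) ℝ)]
  have hlocal : Tendsto (fun δ : ℝ => (8 / (π * δ ^ 4)) * ∫ y in closedBall x δ, (u y - u x))
      (𝓝[>] 0) (𝓝 (Δ u x)) := by
    convert hu.tendsto_setIntegral_closedBall_sub x using 4 with δ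
    · norm_num
    · simp [measureReal_def, EuclideanSpace.volume_ball_fin_two, pi_nonneg]
  rw [← hΔ]
  refine ⟨hlocal, hlocal.congr fun δ => ?_⟩
  rw [integral_ite_norm_sub_le_mul]
  ring
end
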